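/- Let G be a finite simple graph, q a positive integer, and c a proper k-coloring of G. Let H be a connected component of the q-subgraph G_{c,q}, let uv be an edge of G with u ∈ V(H) and v ∉ V(H), and suppose j ∈ {1,…,k} is a color with |j − c(u)| ≥ q and |j − c(v)| ≥ q. Then the connected component H' of the subgraph of G induced by the union of the color classes c⁻¹(j) and c⁻¹(c(v)) that contains v is vertex-disjoint from H. -/

import Mathlib

/-- A proper `k`-coloring of `G`: colors are taken in `{1, …, k}` and adjacent
vertices receive different colors. -/
def IsProperColoring {V : Type*} (G : SimpleGraph V) (k : ℕ) (c : V → ℕ) : Prop :=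
  (∀ v : V, 1 ≤ c v ∧ c v ≤ k) ∧ ∀ ⦃u v : V⦄, G.Adj u v → c u ≠ c v

/-- The chromatic number of `G`: the least `k` such that `G` has a proper
`k`-coloring. -/
noncomputable def chromNum {V : Type*} (G : SimpleGraph V) : ℕ :=
  sInf {k : ℕ | ∃ c : V → ℕ, IsProperColoring G k c}

/-- A `q`-backbone `k`-coloring of `(G, H)`: a proper `k`-coloring of `G` such
that the colors of the endpoints of every edge of `H` differ by at least `q`. -/
def IsBackboneColoring {V : Type*} (G H : SimpleGraph V) (q k : ℕ) (c : V → ℕ) : Prop :=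
  IsProperColoring G k c ∧ ∀ ⦃u v : V⦄, H.Adj u v → (q : ℤ) ≤ |(c u : ℤ) - (c v : ℤ)|

/-- The `q`-backbone chromatic number `BBC_q(G, H)`: the least `k` for which a
`q`-backbone `k`-coloring of `(G, H)` exists. -/
noncomputable def BBC {V : Type*} (G H : SimpleGraph V) (q : ℕ) : ℕ :=
  sInf {k : ℕ | ∃ c : V → ℕ, IsBackboneColoring G H q k c}

/-- The `q`-subgraph `G_{c,q}` of a coloring `c`: the spanning subgraph of `G`
whose edges are those edges of `G` whose endpoint colors differ by at least `q`. -/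
def qSubgraph {V : Type*} (G : SimpleGraph V) (q : ℕ) (c : V → ℕ) : SimpleGraph V where
  Adj u v := G.Adj u v ∧ (q : ℤ) ≤ |(c u : ℤ) - (c v : ℤ)|
  symm := by
    constructor
    intro u v h
    exact ⟨h.1.symm, by rw [abs_sub_comm]; exact h.2⟩
  loopless := by
    constructor
    intro v h
    exact G.loopless.irrefl v h.1

/-- The subgraph of `G` induced by a set `S` of vertices, viewed as a (spanning)
subgraph of `G` on the same vertex set: edges of `G` with both endpoints in `S`. -/
def restrictTo {V : Type*} (G : SimpleGraph V) (S : Set V) : SimpleGraph V where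
  Adj a b := G.Adj a b ∧ a ∈ S ∧ b ∈ S
  symm := ⟨fun a b h => ⟨h.1.symm, h.2.2, h.2.1⟩⟩
  loopless := ⟨fun a h => G.loopless.irrefl a h.1⟩

namespace SimpleGraph

theorem disjoint_supp_connectedComponentMk_of_le {V : Type*} {G G' : SimpleGraph V}
    (h : G ≤ G') {C : G'.ConnectedComponent} {v : V} (hv : v ∉ C.supp) :
    Disjoint (G.connectedComponentMk v).supp C.supp := by
  rw [Set.disjoint_left]
  intro x hx hxC
  apply hv
  have hvx : G'.Reachable v x := (ConnectedComponent.exact hx).symm.mono h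
  rwa [ConnectedComponent.mem_supp_iff, ← ConnectedComponent.sound hvx] at hxC

end SimpleGraph

theorem restrictTo_colorClasses_le_qSubgraph {V : Type*} {G : SimpleGraph V} {q : ℕ}
    {c : V → ℕ} (hc : ∀ ⦃x y : V⦄, G.Adj x y → c x ≠ c y) {a b : ℕ}
    (hab : (q : ℤ) ≤ |(a : ℤ) - (b : ℤ)|) :
    restrictTo G {x : V | c x = a ∨ c x = b} ≤ qSubgraph G q c := by
  rintro x y ⟨hxy, hx | hx, hy | hy⟩
  · exact absurd (hx.trans hy.symm) (hc hxy)
  · exact ⟨hxy, by rwa [hx, hy]⟩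
  · exact ⟨hxy, by rwa [hx, hy, abs_sub_comm]⟩
  · exact absurd (hx.trans hy.symm) (hc hxy)

theorem stmt_11_general {V : Type*} (G : SimpleGraph V) (q : ℕ)
    (k : ℕ) (c : V → ℕ) (hc : IsProperColoring G k c)
    (H : (qSubgraph G q c).ConnectedComponent) (v : V)
    (hv : v ∉ H.supp) (j : ℕ)
    (hjv : (q : ℤ) ≤ |(j : ℤ) - (c v : ℤ)|) :
    Disjoint
      (((restrictTo G {x : V | c x = j ∨ c x = c v}).connectedComponentMk v).supp)
      H.supp :=
  SimpleGraph.disjoint_supp_connectedComponentMk_of_le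
    (restrictTo_colorClasses_le_qSubgraph hc.2 hjv) hv

/-- Let `c` be a proper `k`-coloring of `G`, let `H` be a connected component of
the `q`-subgraph `G_{c,q}`, and let `uv` be an edge of `G` with `u ∈ H`,
`v ∉ H`. If `j` is a color with `|j - c(u)| ≥ q` and `|j - c(v)| ≥ q`, then the
connected component containing `v` of the subgraph of `G` induced by the color
classes of `j` and of `c(v)` is vertex-disjoint from `H`. -/
theorem stmt_11 {V : Type*} [Fintype V] (G : SimpleGraph V) (q : ℕ) (hq : 1 ≤ q)
    (k : ℕ) (c : V → ℕ) (hc : IsProperColoring G k c)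
    (H : (qSubgraph G q c).ConnectedComponent) (u v : V) (huv : G.Adj u v)
    (hu : u ∈ H.supp) (hv : v ∉ H.supp) (j : ℕ) (hj1 : 1 ≤ j) (hjk : j ≤ k)
    (hju : (q : ℤ) ≤ |(j : ℤ) - (c u : ℤ)|) (hjv : (q : ℤ) ≤ |(j : ℤ) - (c v : ℤ)|) :
    Disjoint
      (((restrictTo G {x : V | c x = j ∨ c x = c v}).connectedComponentMk v).supp)
      H.supp :=
  stmt_11_general G q k c hc H v hv j hjv
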